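/- Let U ∈ ℝ^{n×d} have orthonormal columns, let w ∈ ℝ^n satisfy Uᵀw = 0, and fix c ≥ 1. Let l_i = ‖u^(i)‖₂², p_i = min{1, c·l_i/d}, let δ₁, …, δ_n be independent {0,1}-valued random variables with P(δ_i = 1) = p_i, and let D be the random n×n diagonal matrix with D_ii = δ_i/p_i when p_i > 0 and D_ii = 0 when p_i = 0. Then for every δ ∈ (0, 1), with probability at least 1 − δ, ‖UᵀDw‖₂ ≤ δ⁻¹·√(d/c)·‖w‖₂. -/

import Mathlib

open Matrix BigOperators
open scoped Classical

/-- Euclidean norm of a real vector. -/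
noncomputable def vnorm {m : ℕ} (v : Fin m → ℝ) : ℝ := Real.sqrt (∑ i, v i ^ 2)

/-- Probability of the outcome `e` when `e i = true` independently with probability `p i`. -/
noncomputable def bernWeight {n : ℕ} (p : Fin n → ℝ) (e : Fin n → Bool) : ℝ :=
  ∏ i, if e i then p i else 1 - p i

/-!
Since `Uᵀw = 0`, we have `UᵀDw = Uᵀ(D - I)w`, so the `j`-th coordinate of `UᵀDw` is the sum of
the independent centred variables `U i j * w i * (δ_i / p_i - 1)` and its second moment is
`∑ i, U i j ^ 2 * w i ^ 2 * (1 - p_i) / p_i`. Summing over `j`,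
`E ‖UᵀDw‖² = ∑ i, w i ^ 2 * l_i * (1 - p_i) / p_i ≤ (d / c) ‖w‖²`, because the choice
`p_i = min 1 (c l_i / d)` makes `l_i (1 - p_i) / p_i ≤ d / c`. Chebyshev's inequality then bounds
the failure probability by `δ² ≤ δ`.
-/

section Bernoulli

variable {n : ℕ} (p : Fin n → ℝ)

theorem sum_bernWeight_mul_prod (g : Fin n → Bool → ℝ) :
    ∑ e, bernWeight p e * ∏ i, g i (e i) = ∏ i, ((1 - p i) * g i false + p i * g i true) := by
  simp only [bernWeight, ← Finset.prod_mul_distrib]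
  rw [← Fintype.prod_sum (fun i b => (if b then p i else 1 - p i) * g i b)]
  simp [add_comm]

theorem sum_bernWeight : ∑ e, bernWeight p e = 1 := by
  simpa using sum_bernWeight_mul_prod p fun _ _ => 1

theorem bernWeight_nonneg (hp : ∀ i, p i ∈ Set.Icc 0 1) (e : Fin n → Bool) :
    0 ≤ bernWeight p e :=
  Finset.prod_nonneg fun i _ => by
    cases e i <;> simp [(hp i).1, (hp i).2]

theorem sum_bernWeight_mul_apply (i : Fin n) (f : Bool → ℝ) :
    ∑ e, bernWeight p e * f (e i) = (1 - p i) * f false + p i * f true := by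
  have h := sum_bernWeight_mul_prod p fun k b => if k = i then f b else 1
  simp only [Finset.prod_ite_eq', Finset.mem_univ, if_true] at h
  rw [h, Finset.prod_eq_single i (fun k _ hk => by simp [hk]) (by simp)]
  simp

theorem sum_bernWeight_mul_apply_mul_apply {i k : Fin n} (hik : i ≠ k) (f g : Bool → ℝ) :
    ∑ e, bernWeight p e * (f (e i) * g (e k)) =
      ((1 - p i) * f false + p i * f true) * ((1 - p k) * g false + p k * g true) := by
  have h := sum_bernWeight_mul_prod p fun m b => (if m = i then f b else 1) * (if m = k then g b else 1)
  simp only [Finset.prod_mul_distrib, Finset.prod_ite_eq', Finset.mem_univ, if_true] at h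
  rw [h, ← Finset.prod_subset (Finset.subset_univ {i, k}) fun m _ hm => ?_, Finset.prod_pair hik]
  · simp [hik, hik.symm]
  · simp only [Finset.mem_insert, Finset.mem_singleton, not_or] at hm
    simp [hm.1, hm.2]

theorem sum_bernWeight_mul_sum_sq (z : Fin n → Bool → ℝ)
    (hz : ∀ i, (1 - p i) * z i false + p i * z i true = 0) :
    ∑ e, bernWeight p e * (∑ i, z i (e i)) ^ 2 =
      ∑ i, ((1 - p i) * z i false ^ 2 + p i * z i true ^ 2) := by
  have hcross : ∀ i k, ∑ e, bernWeight p e * (z i (e i) * z k (e k)) =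
      if i = k then (1 - p i) * z i false ^ 2 + p i * z i true ^ 2 else 0 := by
    intro i k
    split_ifs with hik
    · subst hik
      simp only [← sq]
      exact sum_bernWeight_mul_apply p i fun b => z i b ^ 2
    · rw [sum_bernWeight_mul_apply_mul_apply p hik, hz, zero_mul]
  calc ∑ e, bernWeight p e * (∑ i, z i (e i)) ^ 2
      = ∑ i, ∑ k, ∑ e, bernWeight p e * (z i (e i) * z k (e k)) := by
        simp_rw [sq, Finset.sum_mul_sum, Finset.mul_sum]
        rw [Finset.sum_comm]
        exact Finset.sum_congr rfl fun _ _ => Finset.sum_comm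
    _ = _ := by simp only [hcross, Finset.sum_ite_eq, Finset.mem_univ, if_true]

end Bernoulli

theorem one_sub_sq_le_sum_ite_le {ι : Type*} [Fintype ι] {W X : ι → ℝ} (hW : ∀ e, 0 ≤ W e)
    (hW1 : ∑ e, W e = 1) {t δ : ℝ} (ht : 0 ≤ t) (hX : ∑ e, W e * X e ^ 2 ≤ (δ * t) ^ 2) :
    1 - δ ^ 2 ≤ ∑ e, if X e ≤ t then W e else 0 := by
  set bad := ∑ e, if X e ≤ t then 0 else W e
  have hsplit : (∑ e, if X e ≤ t then W e else 0) = 1 - bad := by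
    rw [eq_sub_iff_add_eq, ← Finset.sum_add_distrib, ← hW1]
    exact Finset.sum_congr rfl fun e _ => by split_ifs <;> simp
  have hbad_mul : bad * t ^ 2 ≤ ∑ e, W e * X e ^ 2 := by
    rw [Finset.sum_mul]
    refine Finset.sum_le_sum fun e _ => ?_
    split_ifs with h
    · simp [mul_nonneg (hW e) (sq_nonneg (X e))]
    · exact mul_le_mul_of_nonneg_left (pow_le_pow_left₀ ht (not_le.1 h).le 2) (hW e)
  rw [hsplit, sub_le_sub_iff_left]
  rcases ht.eq_or_lt with rfl | ht
  · -- with `t = 0` the second moment vanishes, so `X` vanishes wherever `W` does not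
    refine (Finset.sum_nonpos fun e _ => ?_).trans (sq_nonneg δ)
    split_ifs with h
    · exact le_rfl
    · have hle : W e * X e ^ 2 ≤ 0 := (Finset.single_le_sum
        (fun e _ => mul_nonneg (hW e) (sq_nonneg (X e))) (Finset.mem_univ e)).trans (by simpa using hX)
      have hX0 : 0 < X e ^ 2 := pow_pos (not_le.1 h) 2
      nlinarith
  · have := hbad_mul.trans (hX.trans_eq (mul_pow δ t 2))
    exact le_of_mul_le_mul_right this (by positivity)

theorem mulVec_diagonal_mulVec_of_mulVec_eq_zero {R m k : Type*} [Ring R] [Fintype k] [DecidableEq k]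
    (A : Matrix m k R) {w : k → R} (hw : A *ᵥ w = 0) (s : k → R) :
    A *ᵥ (diagonal s *ᵥ w) = A *ᵥ (diagonal (fun i => s i - 1) *ᵥ w) := by
  rw [← diagonal_sub, diagonal_one, sub_mulVec, mulVec_sub, one_mulVec, hw, sub_zero]

theorem mul_one_sub_min_div_min_le {l c d : ℝ} (hl : 0 ≤ l) (hc : 0 ≤ c) (hd : 0 ≤ d) :
    l * ((1 - min 1 (c * l / d)) / min 1 (c * l / d)) ≤ d / c := by
  have hdc : 0 ≤ d / c := div_nonneg hd hc
  rcases le_total 1 (c * l / d) with h1 | h1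
  · simpa [min_eq_left h1] using hdc
  rw [min_eq_right h1]
  rcases (div_nonneg (mul_nonneg hc hl) hd).eq_or_lt with h0 | h0
  · simpa [← h0] using hdc
  have hc0 : c ≠ 0 := by rintro rfl; simp at h0
  have hl0 : l ≠ 0 := by rintro rfl; simp at h0
  have hd0 : d ≠ 0 := by rintro rfl; simp at h0
  calc l * ((1 - c * l / d) / (c * l / d)) = d / c - l := by field_simp
    _ ≤ d / c := sub_le_self _ hl

theorem eq_zero_of_min_one_mul_sum_sq_div_eq_zero {d : ℕ} {c : ℝ} (hc : 0 < c) {u : Fin d → ℝ}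
    (hu : min 1 (c * (∑ j, u j ^ 2) / d) = 0) : u = 0 := by
  rcases Nat.eq_zero_or_pos d with rfl | hd
  · exact Subsingleton.elim _ _
  have hsum : ∑ j, u j ^ 2 = 0 := by
    have : c * (∑ j, u j ^ 2) / d = 0 := by
      rcases min_choice 1 (c * (∑ j, u j ^ 2) / d) with h | h <;> rw [h] at hu
      · exact absurd hu one_ne_zero
      · exact hu
    simpa [hc.ne', hd.ne'] using this
  funext j
  simpa using (Finset.sum_eq_zero_iff_of_nonneg fun j _ => sq_nonneg (u j)).1 hsum j (Finset.mem_univ j)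

theorem vnorm_sq {m : ℕ} (v : Fin m → ℝ) : vnorm v ^ 2 = ∑ i, v i ^ 2 :=
  Real.sq_sqrt (Finset.sum_nonneg fun i _ => sq_nonneg (v i))

theorem sum_bernWeight_mul_vnorm_sq {n d : ℕ} (U : Matrix (Fin n) (Fin d) ℝ) {w : Fin n → ℝ}
    (hw : Uᵀ *ᵥ w = 0) (p : Fin n → ℝ) (hp : ∀ i, p i = 0 → U i = 0) :
    ∑ e, bernWeight p e * vnorm (Uᵀ *ᵥ (diagonal (fun i => if e i then 1 / p i else 0) *ᵥ w)) ^ 2 =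
      ∑ i, w i ^ 2 * ((∑ j, U i j ^ 2) * ((1 - p i) / p i)) := by
  set z : Fin d → Fin n → Bool → ℝ := fun j i b => U i j * w i * ((if b then 1 / p i else 0) - 1)
  have hcoord : ∀ (e : Fin n → Bool) j, (Uᵀ *ᵥ (diagonal (fun i => if e i then 1 / p i else 0) *ᵥ w)) j =
      ∑ i, z j i (e i) := by
    intro e j
    rw [mulVec_diagonal_mulVec_of_mulVec_eq_zero _ hw]
    simp only [mulVec, dotProduct, transpose_apply, diagonal_apply, ite_mul, zero_mul, Finset.sum_ite_eq,
      Finset.mem_univ, if_true, z]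
    exact Finset.sum_congr rfl fun i _ => by ring
  have hmoments : ∀ j i, (1 - p i) * z j i false + p i * z j i true = 0 ∧
      (1 - p i) * z j i false ^ 2 + p i * z j i true ^ 2 = w i ^ 2 * (U i j ^ 2 * ((1 - p i) / p i)) := by
    intro j i
    by_cases hpi : p i = 0
    · simp [z, hp i hpi]
    · constructor <;> simp only [z, if_true, Bool.false_eq_true, if_false] <;> field_simp <;> ring
  calc _ = ∑ j, ∑ e, bernWeight p e * (∑ i, z j i (e i)) ^ 2 := by
        simp_rw [vnorm_sq, hcoord, Finset.mul_sum]
        exact Finset.sum_comm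
    _ = ∑ j, ∑ i, w i ^ 2 * (U i j ^ 2 * ((1 - p i) / p i)) := by
        simp_rw [sum_bernWeight_mul_sum_sq p _ fun i => (hmoments _ i).1, (hmoments _ _).2]
    _ = _ := by
        rw [Finset.sum_comm]
        simp_rw [Finset.sum_mul, Finset.mul_sum]

theorem stmt_14_general {n d : ℕ}
    (U : Matrix (Fin n) (Fin d) ℝ)
    (w : Fin n → ℝ) (hw : Uᵀ.mulVec w = 0)
    (c : ℕ) (hc : 1 ≤ c)
    (l : Fin n → ℝ) (hl : l = fun i => ∑ j, U i j ^ 2)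
    (prob : Fin n → ℝ) (hprob : prob = fun i => min 1 ((c : ℝ) * l i / d))
    (D : (Fin n → Bool) → Matrix (Fin n) (Fin n) ℝ)
    (hD : D = fun e => Matrix.diagonal fun i => if e i then 1 / prob i else 0)
    (δ : ℝ) (hδ : δ ∈ Set.Ioo (0 : ℝ) 1) :
    1 - δ ≤
      ∑ e : Fin n → Bool,
        if vnorm (Uᵀ.mulVec ((D e).mulVec w)) ≤ δ⁻¹ * Real.sqrt ((d : ℝ) / c) * vnorm w
        then bernWeight prob e else 0 := by
  subst hl hprob hD
  beta_reduce
  set p : Fin n → ℝ := fun i => min 1 (c * (∑ j, U i j ^ 2) / d)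
  obtain ⟨hδ0, hδ1⟩ := hδ
  have hc0 : (0 : ℝ) < c := by exact_mod_cast hc
  have hp : ∀ i, p i ∈ Set.Icc 0 1 := fun i => ⟨le_min zero_le_one (by positivity), min_le_left _ _⟩
  have hmoment : ∑ e, bernWeight p e *
      vnorm (Uᵀ *ᵥ (diagonal (fun i => if e i then 1 / p i else 0) *ᵥ w)) ^ 2 ≤
      (δ * (δ⁻¹ * Real.sqrt ((d : ℝ) / c) * vnorm w)) ^ 2 := by
    rw [sum_bernWeight_mul_vnorm_sq U hw _ fun i => eq_zero_of_min_one_mul_sum_sq_div_eq_zero hc0]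
    calc _ ≤ ∑ i, w i ^ 2 * (d / c) := Finset.sum_le_sum fun i _ =>
          mul_le_mul_of_nonneg_left (mul_one_sub_min_div_min_le (by positivity) hc0.le (by positivity))
            (sq_nonneg _)
      _ = _ := by
        rw [← Finset.sum_mul, ← vnorm_sq, ← mul_assoc, ← mul_assoc, mul_inv_cancel₀ hδ0.ne', one_mul,
          mul_pow, Real.sq_sqrt (by positivity), mul_comm]
  calc 1 - δ ≤ 1 - δ ^ 2 := by nlinarith
    _ ≤ _ := one_sub_sq_le_sum_ite_le (bernWeight_nonneg p hp) (sum_bernWeight p)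
        (mul_nonneg (mul_nonneg (inv_nonneg.2 hδ0.le) (Real.sqrt_nonneg _)) (Real.sqrt_nonneg _)) hmoment

/-- Leverage-score sampling applied to a vector `w` orthogonal to the columns of `U`:
for every `δ ∈ (0,1)`, with probability at least `1 − δ`,
`‖UᵀDw‖ ≤ δ⁻¹·√(d/c)·‖w‖`. -/
theorem stmt_14 {n d : ℕ}
    (U : Matrix (Fin n) (Fin d) ℝ) (hU : Uᵀ * U = 1)
    (w : Fin n → ℝ) (hw : Uᵀ.mulVec w = 0)
    (c : ℕ) (hc : 1 ≤ c)
    (l : Fin n → ℝ) (hl : l = fun i => ∑ j, U i j ^ 2)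
    (prob : Fin n → ℝ) (hprob : prob = fun i => min 1 ((c : ℝ) * l i / d))
    (D : (Fin n → Bool) → Matrix (Fin n) (Fin n) ℝ)
    (hD : D = fun e => Matrix.diagonal fun i => if e i then 1 / prob i else 0)
    (δ : ℝ) (hδ : δ ∈ Set.Ioo (0 : ℝ) 1) :
    1 - δ ≤
      ∑ e : Fin n → Bool,
        if vnorm (Uᵀ.mulVec ((D e).mulVec w)) ≤ δ⁻¹ * Real.sqrt ((d : ℝ) / c) * vnorm w
        then bernWeight prob e else 0 :=
  stmt_14_general U w hw c hc l hl prob hprob D hD δ hδ
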